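/- Let A ⊆ V^n be an intersection of a nonempty family of members of the generalized Dowling arrangement 𝓗(n,G,V). Then A equals the intersection of the minimal (with respect to inclusion) elements of 𝒢′ containing A, and this intersection is transversal: the codimension of A in V^n equals the sum of the codimensions of these minimal elements of 𝒢′. -/

import Mathlib

variable {G : Type*} [Group G] {V : Type*} [AddCommGroup V] [Module ℂ V]

/-- The subspace `Fix(H)` of vectors fixed by every element of the subgroup `H`
under the representation `ρ`. -/
def fixedSpace (ρ : Representation ℂ G V) (H : Subgroup G) : Submodule ℂ V where
  carrier := {v | ∀ h ∈ H, ρ h v = v}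
  add_mem' := by
    intro a b ha hb h hh
    rw [map_add, ha h hh, hb h hh]
  zero_mem' := by
    intro h hh
    exact map_zero _
  smul_mem' := by
    intro c a ha h hh
    rw [map_smul, ha h hh]

/-- A subgroup `H ≤ G` is closed (w.r.t. `ρ`) if every subgroup `K` with `H ≤ K`
and `Fix(K) = Fix(H)` satisfies `K = H`. -/
def IsClosedSubgroup (ρ : Representation ℂ G V) (H : Subgroup G) : Prop :=
  ∀ K : Subgroup G, H ≤ K → fixedSpace ρ K = fixedSpace ρ H → K = H

/-- The subspace `H^K(i₁^{g₁K},…,i_k^{g_kK})` of `V^n`: tuples `w` such that there is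
`v ∈ Fix(K)` with `w (i j) = ρ (g j) v` for all `j`. -/
def HKsub (ρ : Representation ℂ G V) {n k : ℕ} (K : Subgroup G)
    (i : Fin k → Fin n) (g : Fin k → G) : Submodule ℂ (Fin n → V) where
  carrier := {w | ∃ v, v ∈ fixedSpace ρ K ∧ ∀ j, w (i j) = ρ (g j) v}
  add_mem' := by
    rintro w₁ w₂ ⟨v₁, hv₁, h₁⟩ ⟨v₂, hv₂, h₂⟩
    exact ⟨v₁ + v₂, (fixedSpace ρ K).add_mem hv₁ hv₂, fun j => by
      simp only [Pi.add_apply, map_add, h₁ j, h₂ j]⟩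
  zero_mem' :=
    ⟨0, (fixedSpace ρ K).zero_mem, fun j => by simp⟩
  smul_mem' := by
    rintro c w ⟨v, hv, h⟩
    exact ⟨c • v, (fixedSpace ρ K).smul_mem c hv, fun j => by
      simp only [Pi.smul_apply, map_smul, h j]⟩

/-- The subspace `H(i,j,g) = {(v₁,…,v_n) ∈ V^n : v_j = ρ(g) v_i}` of `V^n`. -/
def Hsub (ρ : Representation ℂ G V) {n : ℕ} (i j : Fin n) (g : G) :
    Submodule ℂ (Fin n → V) where
  carrier := {w | w j = ρ g (w i)}
  add_mem' := by
    intro w₁ w₂ h₁ h₂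
    simp only [Set.mem_setOf_eq, Pi.add_apply, map_add] at *
    rw [h₁, h₂]
  zero_mem' := by simp
  smul_mem' := by
    intro c w hw
    simp only [Set.mem_setOf_eq, Pi.smul_apply, map_smul] at *
    rw [hw]

/-- The generalized Dowling arrangement 𝓗(n,G,V): the subspaces `H(i,j,g)` for
`i < j`, `g ∈ G`, together with the subspaces `H(i,i,g)` for `g ≠ e`. -/
def DowlingArrangement (ρ : Representation ℂ G V) (n : ℕ) :
    Set (Submodule ℂ (Fin n → V)) :=
  {W | (∃ i j : Fin n, ∃ g : G, i < j ∧ W = Hsub ρ i j g) ∨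
       (∃ i : Fin n, ∃ g : G, g ≠ 1 ∧ W = Hsub ρ i i g)}

/-- The family 𝒢′ of subspaces `H^K(i₁^{g₁K},…,i_k^{g_kK})` of `V^n`, where `K` is a
closed subgroup of `G`, the indices are strictly increasing, and either `k ≥ 2`
or (`k = 1` and `K ≠ {e}`). -/
def GPrime (ρ : Representation ℂ G V) (n : ℕ) : Set (Submodule ℂ (Fin n → V)) :=
  {W | ∃ (k : ℕ) (K : Subgroup G) (i : Fin (k + 1) → Fin n) (g : Fin (k + 1) → G),
        StrictMono i ∧ IsClosedSubgroup ρ K ∧ (k = 0 → K ≠ ⊥) ∧ W = HKsub ρ K i g}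


/-!
Every intersection of Dowling hyperplanes has a block normal form: the coordinates are
partitioned into labelled blocks, and a tuple lies in the intersection iff on each block `r` it
has the form `m ↦ ρ(g_m) v_r` with `v_r ∈ Fix(K_r)`. Adding the hyperplane `v_j = ρ(g) v_i`
either enlarges `K_r` (when `i` and `j` lie in one block) or glues the block of `j`, twisted by a
group element, onto the block of `i`. Replacing each `K_r` by its closure and merging all blocks
with `Fix(K_r) = 0` into one, the block spaces different from `V^n` are exactly the minimal
members of 𝒢′ above the intersection: tuples supported on a single block show that every member
of 𝒢′ containing the intersection contains a block space, and that distinct block spaces are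
incomparable. Block spaces constrain disjoint sets of coordinates, so their intersection is
transversal.
-/

section FixedSpace

variable (ρ : Representation ℂ G V)

lemma mem_fixedSpace {K : Subgroup G} {v : V} :
    v ∈ fixedSpace ρ K ↔ ∀ h ∈ K, ρ h v = v := Iff.rfl

lemma apply_eq_apply_apply_iff (a b c : G) (x y : V) :
    ρ a y = ρ b (ρ c x) ↔ y = ρ (a⁻¹ * b * c) x := by
  rw [map_mul, map_mul, Module.End.mul_apply, Module.End.mul_apply]
  constructor
  · intro h
    rw [← h, ρ.inv_self_apply]
  · rintro rfl
    rw [ρ.self_inv_apply]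

lemma fixedSpace_antitone : Antitone (fixedSpace ρ) :=
  fun _ _ hKL _ hv k hk => hv k (hKL hk)

def Representation.fixingSubgroup (U : Set V) : Subgroup G where
  carrier := {g | ∀ v ∈ U, ρ g v = v}
  one_mem' := by simp
  mul_mem' {a b} ha hb v hv := by rw [map_mul, Module.End.mul_apply, hb v hv, ha v hv]
  inv_mem' {a} ha v hv := ρ.inv_apply_eq_iff.2 (ha v hv).symm

lemma le_fixingSubgroup_iff {K : Subgroup G} {U : Set V} :
    K ≤ ρ.fixingSubgroup U ↔ U ⊆ fixedSpace ρ K :=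
  ⟨fun h _ hv _ hk => h hk _ hv, fun h _ hk _ hv => h hv _ hk⟩

lemma isClosedSubgroup_fixingSubgroup (U : Set V) :
    IsClosedSubgroup ρ (ρ.fixingSubgroup U) := by
  intro L hle hfix
  refine le_antisymm ?_ hle
  rw [le_fixingSubgroup_iff, hfix, ← le_fixingSubgroup_iff]

lemma fixedSpace_fixingSubgroup_fixedSpace (K : Subgroup G) :
    fixedSpace ρ (ρ.fixingSubgroup (fixedSpace ρ K)) = fixedSpace ρ K :=
  le_antisymm (fixedSpace_antitone ρ ((le_fixingSubgroup_iff ρ).2 subset_rfl))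
    ((le_fixingSubgroup_iff ρ).1 le_rfl)

lemma fixedSpace_sup (K L : Subgroup G) :
    fixedSpace ρ (K ⊔ L) = fixedSpace ρ K ⊓ fixedSpace ρ L := by
  refine le_antisymm (le_inf (fixedSpace_antitone ρ le_sup_left)
    (fixedSpace_antitone ρ le_sup_right)) ?_
  refine (le_fixingSubgroup_iff ρ).1 (sup_le ?_ ?_)
  · exact (le_fixingSubgroup_iff ρ).2 fun _ hv => hv.1
  · exact (le_fixingSubgroup_iff ρ).2 fun _ hv => hv.2

lemma mem_fixedSpace_zpowers {c : G} {v : V} :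
    v ∈ fixedSpace ρ (Subgroup.zpowers c) ↔ ρ c v = v := by
  rw [← SetLike.mem_coe, ← Set.singleton_subset_iff, ← le_fixingSubgroup_iff,
    Subgroup.zpowers_le]
  simp [Representation.fixingSubgroup]

lemma mem_fixedSpace_comap_conj {K : Subgroup G} {h : G} {v : V} :
    v ∈ fixedSpace ρ (K.comap (MulAut.conj h).toMonoidHom) ↔ ρ h v ∈ fixedSpace ρ K := by
  have conj_apply (x : G) : ρ (h * x * h⁻¹) (ρ h v) = ρ h (ρ x v) := by simp
  simp only [mem_fixedSpace, Subgroup.mem_comap, MulEquiv.coe_toMonoidHom, MulAut.conj_apply]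
  constructor
  · intro hv k hk
    have hk' : h * (h⁻¹ * k * h) * h⁻¹ = k := by group
    have := conj_apply (h⁻¹ * k * h)
    rwa [hk', hv (h⁻¹ * k * h) (by rw [hk']; exact hk)] at this
  · intro hv x hx
    exact (ρ.apply_bijective h).injective (by rw [← conj_apply, hv _ hx])

lemma fixedSpace_ne_top (hfaith : Function.Injective ρ) {K : Subgroup G} (hK : K ≠ ⊥) :
    fixedSpace ρ K ≠ ⊤ := by
  obtain ⟨⟨k, hk⟩, hk1⟩ := Subgroup.ne_bot_iff_exists_ne_one.1 hK
  intro htop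
  refine hk1 (Subtype.ext (hfaith (LinearMap.ext fun v => ?_)))
  change ρ k v = ρ 1 v
  rw [map_one, Module.End.one_apply]
  exact (htop ▸ Submodule.mem_top : v ∈ fixedSpace ρ K) k hk

end FixedSpace

section HKsubOn

variable (ρ : Representation ℂ G V) {n : ℕ}

/-- `H^K(i^{g_i K} : i ∈ I)`, indexed by a finset `I` of coordinates. -/
def HKsubOn (K : Subgroup G) (I : Finset (Fin n)) (g : Fin n → G) :
    Submodule ℂ (Fin n → V) where
  carrier := {w | ∃ v ∈ fixedSpace ρ K, ∀ i ∈ I, w i = ρ (g i) v}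
  add_mem' := by
    rintro w₁ w₂ ⟨v₁, hv₁, h₁⟩ ⟨v₂, hv₂, h₂⟩
    exact ⟨v₁ + v₂, add_mem hv₁ hv₂, fun i hi => by simp [h₁ i hi, h₂ i hi]⟩
  zero_mem' := ⟨0, zero_mem _, fun i _ => by simp⟩
  smul_mem' := by
    rintro c w ⟨v, hv, h⟩
    exact ⟨c • v, Submodule.smul_mem _ c hv, fun i hi => by simp [h i hi]⟩

variable {K : Subgroup G} {I : Finset (Fin n)} {g : Fin n → G} {w : Fin n → V}

lemma mem_HKsubOn : w ∈ HKsubOn ρ K I g ↔ ∃ v ∈ fixedSpace ρ K, ∀ i ∈ I, w i = ρ (g i) v :=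
  Iff.rfl

lemma HKsub_eq_HKsubOn {k : ℕ} (K : Subgroup G) {i : Fin k → Fin n} (hi : Function.Injective i)
    {g : Fin k → G} {g' : Fin n → G} (hg : ∀ j, g' (i j) = g j) :
    HKsub ρ K i g = HKsubOn ρ K (Finset.univ.map ⟨i, hi⟩) g' := by
  ext w
  simp [HKsub, mem_HKsubOn, hg]

lemma mem_GPrime_iff {W : Submodule ℂ (Fin n → V)} :
    W ∈ GPrime ρ n ↔ ∃ (K : Subgroup G) (I : Finset (Fin n)) (g : Fin n → G),
      I.Nonempty ∧ IsClosedSubgroup ρ K ∧ (I.card = 1 → K ≠ ⊥) ∧ W = HKsubOn ρ K I g := by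
  constructor
  · rintro ⟨k, K, i, g, hmono, hK, hk, rfl⟩
    exact ⟨K, Finset.univ.map ⟨i, hmono.injective⟩, Function.extend i g 1, by simp, hK,
      fun h => hk (by simpa using h),
      HKsub_eq_HKsubOn ρ K hmono.injective (hmono.injective.extend_apply g 1)⟩
  · rintro ⟨K, I, g, hI, hK, hcard, rfl⟩
    obtain ⟨k, hk⟩ : ∃ k, I.card = k + 1 := Nat.exists_eq_succ_of_ne_zero hI.card_pos.ne'
    refine ⟨k, K, I.orderEmbOfFin hk, g ∘ I.orderEmbOfFin hk,
      (I.orderEmbOfFin hk).strictMono, hK, fun h => hcard (by omega), ?_⟩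
    rw [HKsub_eq_HKsubOn ρ K (I.orderEmbOfFin hk).injective
      (g := g ∘ I.orderEmbOfFin hk) (g' := g) (fun _ => rfl)]
    exact congrArg (HKsubOn ρ K · g) (I.map_orderEmbOfFin_univ hk).symm

lemma mem_Hsub {i j : Fin n} {g₀ : G} : w ∈ Hsub ρ i j g₀ ↔ w j = ρ g₀ (w i) := Iff.rfl

lemma mem_HKsubOn_of_forall_eq_zero (hw : ∀ i ∈ I, w i = 0) : w ∈ HKsubOn ρ K I g :=
  ⟨0, zero_mem _, fun i hi => by rw [hw i hi, map_zero]⟩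

lemma HKsubOn_empty : HKsubOn ρ K ∅ g = ⊤ :=
  eq_top_iff.2 fun _ _ => mem_HKsubOn_of_forall_eq_zero ρ (by simp)

lemma HKsubOn_bot_singleton (i : Fin n) : HKsubOn ρ ⊥ {i} g = ⊤ :=
  eq_top_iff.2 fun w _ => ⟨ρ (g i)⁻¹ (w i), fun h hh => by simp [Subgroup.mem_bot.1 hh],
    by simp⟩

lemma apply_eq_zero_of_mem_HKsubOn (hw : w ∈ HKsubOn ρ K I g) {i j : Fin n} (hi : i ∈ I)
    (hj : j ∈ I) (hwj : w j = 0) : w i = 0 := by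
  obtain ⟨v, -, hv⟩ := hw
  have : v = 0 := (ρ.apply_bijective (g j)).injective (by rw [← hv j hj, hwj, map_zero])
  rw [hv i hi, this, map_zero]

lemma exists_single_not_mem_HKsubOn [Nontrivial V] (hfaith : Function.Injective ρ) {i : Fin n}
    (hi : i ∈ I) (hI : I.card = 1 → K ≠ ⊥) : ∃ u, Pi.single i u ∉ HKsubOn ρ K I g := by
  by_cases hj : ∃ j ∈ I, j ≠ i
  · obtain ⟨j, hj, hji⟩ := hj
    obtain ⟨u, hu⟩ := exists_ne (0 : V)
    exact ⟨u, fun hw => hu (by simpa using apply_eq_zero_of_mem_HKsubOn ρ hw hi hj (by simp [hji]))⟩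
  · push Not at hj
    have hI1 : I = {i} := Finset.eq_singleton_iff_unique_mem.2 ⟨hi, hj⟩
    obtain ⟨v₀, hv₀⟩ := SetLike.exists_not_mem_of_ne_top _
      (fixedSpace_ne_top ρ hfaith (hI (by simp [hI1])))
    refine ⟨ρ (g i) v₀, fun ⟨v, hv, hw⟩ => hv₀ ?_⟩
    have hv' : ρ (g i) v₀ = ρ (g i) v := by simpa using hw i hi
    rwa [(ρ.apply_bijective (g i)).injective hv']

end HKsubOn

lemma finite_dowlingArrangement [Finite G] (ρ : Representation ℂ G V) (n : ℕ) :
    (DowlingArrangement ρ n).Finite :=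
  (Set.finite_range fun p : Fin n × Fin n × G => Hsub ρ p.1 p.2.1 p.2.2).subset <| by
    rintro W (⟨i, j, g, -, rfl⟩ | ⟨i, g, -, rfl⟩) <;> exact ⟨(_, _, _), rfl⟩

lemma setOf_minimal_eq_image {α ι : Type*} [PartialOrder α] {P : α → Prop} {f : ι → α}
    {s : Set ι} (hf : ∀ i ∈ s, P (f i)) (hP : ∀ x, P x → ∃ i ∈ s, f i ≤ x)
    (hinj : ∀ i ∈ s, ∀ j ∈ s, f j ≤ f i → j = i) : {x | Minimal P x} = f '' s := by
  ext x
  constructor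
  · intro hx
    obtain ⟨i, hi, hix⟩ := hP x hx.1
    exact ⟨i, hi, le_antisymm hix (hx.2 (hf i hi) hix)⟩
  · rintro ⟨i, hi, rfl⟩
    refine ⟨hf i hi, fun y hy hyi => ?_⟩
    obtain ⟨j, hj, hjy⟩ := hP y hy
    rwa [← hinj i hi j hj (hjy.trans hyi)]

/-- A partition of the coordinates into blocks, coordinate `m` lying in block `label m` (labels
need not be attained), with a subgroup `K r` per block and a group element `g m` per coordinate. -/
structure BlockData (G : Type*) [Group G] (n : ℕ) where
  label : Fin n → Fin n
  K : Fin n → Subgroup G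
  g : Fin n → G

namespace BlockData

variable (ρ : Representation ℂ G V) {n : ℕ} (B : BlockData G n)

def block (r : Fin n) : Finset (Fin n) := Finset.univ.filter (B.label · = r)

lemma mem_block {m r : Fin n} : m ∈ B.block r ↔ B.label m = r := by simp [block]

def blockSpace (r : Fin n) : Submodule ℂ (Fin n → V) := HKsubOn ρ (B.K r) (B.block r) B.g

def space : Submodule ℂ (Fin n → V) := ⨅ r, B.blockSpace ρ r

lemma mem_space_iff {w : Fin n → V} :
    w ∈ B.space ρ ↔ ∃ v : Fin n → V, (∀ r, v r ∈ fixedSpace ρ (B.K r)) ∧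
      ∀ m, w m = ρ (B.g m) (v (B.label m)) := by
  simp only [space, Submodule.mem_iInf, blockSpace, mem_HKsubOn, mem_block]
  constructor
  · intro h
    choose v hv hw using h
    exact ⟨v, hv, fun m => hw _ m rfl⟩
  · rintro ⟨v, hv, hw⟩ r
    exact ⟨v r, hv r, fun m hm => hm ▸ hw m⟩

lemma mem_blockSpace_of_forall_eq_zero {r : Fin n} {w : Fin n → V}
    (hw : ∀ m, B.label m = r → w m = 0) : w ∈ B.blockSpace ρ r :=
  mem_HKsubOn_of_forall_eq_zero ρ fun m hm => hw m ((B.mem_block).1 hm)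

lemma single_mem_blockSpace {m r : Fin n} (h : B.label m ≠ r) (u : V) :
    Pi.single m u ∈ B.blockSpace ρ r :=
  B.mem_blockSpace_of_forall_eq_zero ρ fun m' hm' => by
    rw [Pi.single_apply, if_neg]
    rintro rfl
    exact h hm'

def blockVector (r : Fin n) (v : V) : Fin n → V := fun m =>
  ρ (B.g m) ((Pi.single r v : Fin n → V) (B.label m))

lemma blockVector_mem_space {r : Fin n} {v : V} (hv : v ∈ fixedSpace ρ (B.K r)) :
    B.blockVector ρ r v ∈ B.space ρ := by
  refine (B.mem_space_iff ρ).2 ⟨Pi.single r v, fun t => ?_, fun _ => rfl⟩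
  rcases eq_or_ne t r with rfl | ht
  · simpa using hv
  · simp [ht]

def initial : BlockData G n := ⟨id, fun _ => ⊥, fun _ => 1⟩

lemma space_initial : (initial : BlockData G n).space ρ = ⊤ :=
  eq_top_iff.2 fun w _ => (mem_space_iff ρ _).2
    ⟨w, fun _ _ hh => by simp [Subgroup.mem_bot.1 hh], fun _ => by simp [initial]⟩

@[simps]
def adjoin (r : Fin n) (c : G) : BlockData G n :=
  { B with K := Function.update B.K r (B.K r ⊔ Subgroup.zpowers c) }

lemma mem_fixedSpace_adjoin_K_self {r : Fin n} {c : G} {v : V} :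
    v ∈ fixedSpace ρ ((B.adjoin r c).K r) ↔ v ∈ fixedSpace ρ (B.K r) ∧ ρ c v = v := by
  simp only [adjoin_K, Function.update_self, fixedSpace_sup, Submodule.mem_inf,
    mem_fixedSpace_zpowers]

lemma Hsub_inf_space_of_label_eq {i j : Fin n} (hij : B.label j = B.label i) (g₀ : G) :
    Hsub ρ i j g₀ ⊓ B.space ρ = (B.adjoin (B.label i) ((B.g j)⁻¹ * g₀ * B.g i)).space ρ := by
  set r := B.label i
  set c := (B.g j)⁻¹ * g₀ * B.g i
  have hK {t : Fin n} (ht : t ≠ r) : (B.adjoin r c).K t = B.K t := by simp [ht]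
  ext w
  simp only [Submodule.mem_inf, mem_space_iff, mem_Hsub, adjoin_label, adjoin_g]
  constructor
  · rintro ⟨hH, v, hv, hw⟩
    rw [hw i, hw j, hij, apply_eq_apply_apply_iff] at hH
    refine ⟨v, fun t => ?_, hw⟩
    rcases eq_or_ne t r with rfl | ht
    · exact (B.mem_fixedSpace_adjoin_K_self ρ).2 ⟨hv _, hH.symm⟩
    · exact hK ht ▸ hv t
  · rintro ⟨v, hv, hw⟩
    have hvr := (B.mem_fixedSpace_adjoin_K_self ρ).1 (hv r)
    refine ⟨?_, v, fun t => ?_, hw⟩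
    · rw [hw i, hw j, hij, apply_eq_apply_apply_iff]
      exact hvr.2.symm
    · rcases eq_or_ne t r with rfl | ht
      · exact hvr.1
      · exact hK ht ▸ hv t

@[simps]
def glue (r s : Fin n) (h : G) : BlockData G n where
  label m := if B.label m = s then r else B.label m
  K := Function.update B.K r (B.K r ⊔ (B.K s).comap (MulAut.conj h).toMonoidHom)
  g m := if B.label m = s then B.g m * h else B.g m

lemma mem_fixedSpace_glue_K_self {r s : Fin n} {h : G} {v : V} :
    v ∈ fixedSpace ρ ((B.glue r s h).K r) ↔
      v ∈ fixedSpace ρ (B.K r) ∧ ρ h v ∈ fixedSpace ρ (B.K s) := by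
  simp only [glue_K, Function.update_self, fixedSpace_sup, Submodule.mem_inf,
    mem_fixedSpace_comap_conj]

lemma Hsub_inf_space_of_label_ne {i j : Fin n} (hij : B.label j ≠ B.label i) (g₀ : G) :
    Hsub ρ i j g₀ ⊓ B.space ρ =
      (B.glue (B.label i) (B.label j) ((B.g j)⁻¹ * g₀ * B.g i)).space ρ := by
  set r := B.label i
  set s := B.label j
  set h := (B.g j)⁻¹ * g₀ * B.g i
  have hK {t : Fin n} (ht : t ≠ r) : (B.glue r s h).K t = B.K t := by simp [ht]
  ext w
  simp only [Submodule.mem_inf, mem_space_iff, mem_Hsub, glue_label, glue_g]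
  constructor
  · rintro ⟨hH, v, hv, hw⟩
    rw [hw i, hw j, apply_eq_apply_apply_iff] at hH
    refine ⟨v, fun t => ?_, fun m => ?_⟩
    · rcases eq_or_ne t r with rfl | ht
      · exact (B.mem_fixedSpace_glue_K_self ρ).2 ⟨hv _, hH ▸ hv s⟩
      · exact hK ht ▸ hv t
    · split_ifs with hm
      · rw [hw m, hm, hH, ← Module.End.mul_apply, ← map_mul]
      · exact hw m
  · rintro ⟨v, hv, hw⟩
    have hvr := (B.mem_fixedSpace_glue_K_self ρ).1 (hv r)
    refine ⟨?_, Function.update v s (ρ h (v r)), fun t => ?_, fun m => ?_⟩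
    · rw [hw j, hw i, if_pos rfl, if_pos rfl, if_neg hij.symm, if_neg hij.symm, map_mul,
        Module.End.mul_apply, apply_eq_apply_apply_iff]
    · rcases eq_or_ne t s with rfl | hts
      · simpa using hvr.2
      · rw [Function.update_of_ne hts]
        rcases eq_or_ne t r with rfl | htr
        · exact hvr.1
        · exact hK htr ▸ hv t
    · by_cases hm : B.label m = s
      · rw [hw m, if_pos hm, if_pos hm, hm, Function.update_self, map_mul, Module.End.mul_apply]
      · rw [hw m, if_neg hm, if_neg hm, Function.update_of_ne hm]

@[simps]
def close : BlockData G n :=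
  { B with K := fun r => ρ.fixingSubgroup (fixedSpace ρ (B.K r)) }

lemma space_close : (B.close ρ).space ρ = B.space ρ := by
  ext w
  simp only [mem_space_iff, close, fixedSpace_fixingSubgroup_fixedSpace]

@[simps]
noncomputable def mergeZeroBlocks (z : Fin n) : BlockData G n :=
  { B with label := fun m => if fixedSpace ρ (B.K (B.label m)) = ⊥ then z else B.label m }

lemma space_mergeZeroBlocks {z : Fin n} (hz : fixedSpace ρ (B.K z) = ⊥) :
    (B.mergeZeroBlocks ρ z).space ρ = B.space ρ := by
  have key (v : Fin n → V) (hv : ∀ r, v r ∈ fixedSpace ρ (B.K r)) (m : Fin n) :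
      v ((B.mergeZeroBlocks ρ z).label m) = v (B.label m) := by
    have eq_zero (r : Fin n) (hr : fixedSpace ρ (B.K r) = ⊥) : v r = 0 := by simpa [hr] using hv r
    simp only [mergeZeroBlocks_label]
    split_ifs with hm
    · rw [eq_zero z hz, eq_zero _ hm]
    · rfl
  ext w
  simp only [mem_space_iff, mergeZeroBlocks_K, mergeZeroBlocks_g]
  exact exists_congr fun v => and_congr_right fun hv => by simp only [key v hv]

lemma exists_space_eq_inf (S : Finset (Submodule ℂ (Fin n → V)))
    (hS : ↑S ⊆ DowlingArrangement ρ n) : ∃ B : BlockData G n, B.space ρ = S.inf id := by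
  classical
  induction S using Finset.induction_on with
  | empty => exact ⟨initial, space_initial ρ⟩
  | insert W S _ ih =>
    rw [Finset.coe_insert, Set.insert_subset_iff] at hS
    obtain ⟨B, hB⟩ := ih hS.2
    obtain ⟨i, j, g₀, rfl⟩ : ∃ i j g₀, W = Hsub ρ i j g₀ := by
      rcases hS.1 with ⟨i, j, g₀, -, h⟩ | ⟨i, g₀, -, h⟩ <;> exact ⟨_, _, _, h⟩
    rw [Finset.inf_insert, id, ← hB]
    rcases eq_or_ne (B.label j) (B.label i) with h | h
    · exact ⟨_, (B.Hsub_inf_space_of_label_eq ρ h g₀).symm⟩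
    · exact ⟨_, (B.Hsub_inf_space_of_label_ne ρ h g₀).symm⟩

structure IsNormal : Prop where
  isClosedSubgroup : ∀ r, IsClosedSubgroup ρ (B.K r)
  label_eq_of_fixedSpace_eq_bot : ∀ m m', fixedSpace ρ (B.K (B.label m)) = ⊥ →
    fixedSpace ρ (B.K (B.label m')) = ⊥ → B.label m = B.label m'

lemma exists_isNormal_space_eq :
    ∃ B' : BlockData G n, B'.IsNormal ρ ∧ B'.space ρ = B.space ρ := by
  have hclosed (r : Fin n) : IsClosedSubgroup ρ ((B.close ρ).K r) :=
    isClosedSubgroup_fixingSubgroup ρ _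
  by_cases hz : ∃ z, fixedSpace ρ ((B.close ρ).K z) = ⊥
  · obtain ⟨z, hz⟩ := hz
    have label_eq (m : Fin n)
        (hm : fixedSpace ρ ((B.close ρ).K (((B.close ρ).mergeZeroBlocks ρ z).label m)) = ⊥) :
        ((B.close ρ).mergeZeroBlocks ρ z).label m = z := by
      simp only [mergeZeroBlocks_label] at hm ⊢
      split_ifs at hm ⊢ with h
      · rfl
      · exact absurd hm h
    refine ⟨(B.close ρ).mergeZeroBlocks ρ z, ⟨hclosed, fun m m' hm hm' => ?_⟩, ?_⟩
    · rw [label_eq m hm, label_eq m' hm']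
    · rw [space_mergeZeroBlocks _ _ hz, space_close]
  · push Not at hz
    exact ⟨B.close ρ, ⟨hclosed, fun m _ hm _ => absurd hm (hz _)⟩, B.space_close ρ⟩

variable {ρ} in
lemma exists_isNormal_space_eq_sInf [Finite G] {S : Set (Submodule ℂ (Fin n → V))}
    (hS : S ⊆ DowlingArrangement ρ n) :
    ∃ B : BlockData G n, B.IsNormal ρ ∧ B.space ρ = sInf S := by
  have hfin := (finite_dowlingArrangement ρ n).subset hS
  obtain ⟨B, hB⟩ := exists_space_eq_inf ρ hfin.toFinset (by simpa using hS)
  obtain ⟨B', hB', hspace⟩ := B.exists_isNormal_space_eq ρ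
  exact ⟨B', hB', by rw [hspace, hB, Finset.inf_id_eq_sInf, hfin.coe_toFinset]⟩

section Minimality

open Classical in
noncomputable def essentialLabels : Finset (Fin n) :=
  Finset.univ.filter fun r => (B.block r).Nonempty ∧ ((B.block r).card = 1 → B.K r ≠ ⊥)

lemma mem_essentialLabels {r : Fin n} :
    r ∈ B.essentialLabels ↔ (B.block r).Nonempty ∧ ((B.block r).card = 1 → B.K r ≠ ⊥) := by
  simp [essentialLabels]

lemma blockSpace_eq_top_of_not_mem {r : Fin n} (hr : r ∉ B.essentialLabels) :
    B.blockSpace ρ r = ⊤ := by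
  simp only [mem_essentialLabels, not_and, Classical.not_imp, not_not] at hr
  rcases (B.block r).eq_empty_or_nonempty with h | h
  · rw [blockSpace, h, HKsubOn_empty]
  · obtain ⟨hcard, hK⟩ := hr h
    obtain ⟨m, hm⟩ := Finset.card_eq_one.1 hcard
    rw [blockSpace, hm, hK, HKsubOn_bot_singleton]

lemma space_eq_iInf_essentialLabels :
    B.space ρ = ⨅ r ∈ B.essentialLabels, B.blockSpace ρ r := by
  refine le_antisymm (le_iInf₂ fun r _ => iInf_le _ r) (le_iInf fun r => ?_)
  by_cases hr : r ∈ B.essentialLabels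
  · exact iInf₂_le r hr
  · rw [B.blockSpace_eq_top_of_not_mem ρ hr]
    exact le_top

lemma blockSpace_mem_GPrime (hB : B.IsNormal ρ) {r : Fin n} (hr : r ∈ B.essentialLabels) :
    B.blockSpace ρ r ∈ GPrime ρ n :=
  have h := (B.mem_essentialLabels.1 hr)
  (mem_GPrime_iff ρ).2 ⟨_, _, _, h.1, hB.isClosedSubgroup r, h.2, rfl⟩

lemma eq_of_blockSpace_le [Nontrivial V] (hfaith : Function.Injective ρ) {r r' : Fin n}
    (hr : r ∈ B.essentialLabels) (hle : B.blockSpace ρ r' ≤ B.blockSpace ρ r) : r' = r := by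
  obtain ⟨⟨m, hm⟩, hcard⟩ := (B.mem_essentialLabels.1 hr)
  obtain ⟨u, hu⟩ := exists_single_not_mem_HKsubOn ρ hfaith hm hcard
  by_contra hne
  exact hu (hle (B.single_mem_blockSpace ρ (by rwa [(B.mem_block).1 hm, ne_comm]) u))

variable {K' : Subgroup G} {I' : Finset (Fin n)} {g' : Fin n → G}

lemma label_mem_essentialLabels [Nontrivial V] (hfaith : Function.Injective ρ)
    (hI' : I'.card = 1 → K' ≠ ⊥) (hle : B.space ρ ≤ HKsubOn ρ K' I' g') {i : Fin n}
    (hi : i ∈ I') : B.label i ∈ B.essentialLabels := by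
  by_contra h
  obtain ⟨u, hu⟩ := exists_single_not_mem_HKsubOn ρ hfaith hi hI'
  refine hu (hle ?_)
  rw [space_eq_iInf_essentialLabels]
  exact Submodule.mem_iInf _ |>.2 fun r => Submodule.mem_iInf _ |>.2 fun hr =>
    B.single_mem_blockSpace ρ (fun h' => h (h' ▸ hr)) u

lemma label_eq_of_space_le (hB : B.IsNormal ρ) (hle : B.space ρ ≤ HKsubOn ρ K' I' g')
    {i j : Fin n} (hi : i ∈ I') (hj : j ∈ I') : B.label i = B.label j := by
  have key {i j : Fin n} (hi : i ∈ I') (hj : j ∈ I') (hfix : fixedSpace ρ (B.K (B.label i)) ≠ ⊥) :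
      B.label i = B.label j := by
    by_contra hne
    obtain ⟨v, hv, hv0⟩ := Submodule.exists_mem_ne_zero_of_ne_bot hfix
    have hw := hle (B.blockVector_mem_space ρ hv)
    have := apply_eq_zero_of_mem_HKsubOn ρ hw hi hj (by simp [blockVector, Ne.symm hne])
    simp only [blockVector, Pi.single_eq_same] at this
    exact hv0 ((map_eq_zero_iff _ (ρ.apply_bijective _).injective).1 this)
  by_cases hfix : fixedSpace ρ (B.K (B.label i)) = ⊥
  · by_cases hfix' : fixedSpace ρ (B.K (B.label j)) = ⊥
    · exact hB.label_eq_of_fixedSpace_eq_bot i j hfix hfix'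
    · exact (key hj hi hfix').symm
  · exact key hi hj hfix

lemma blockSpace_le_of_subset_block (hle : B.space ρ ≤ HKsubOn ρ K' I' g') {r : Fin n}
    (hI' : I' ⊆ B.block r) : B.blockSpace ρ r ≤ HKsubOn ρ K' I' g' := by
  rintro w ⟨v, hv, hw⟩
  obtain ⟨v', hv', hw'⟩ := hle (B.blockVector_mem_space ρ hv)
  refine ⟨v', hv', fun i hi => ?_⟩
  rw [hw i (hI' hi), ← hw' i hi, blockVector, (B.mem_block).1 (hI' hi), Pi.single_eq_same]

lemma exists_blockSpace_le [Nontrivial V] (hfaith : Function.Injective ρ) (hB : B.IsNormal ρ)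
    {W : Submodule ℂ (Fin n → V)} (hW : W ∈ GPrime ρ n) (hle : B.space ρ ≤ W) :
    ∃ r ∈ B.essentialLabels, B.blockSpace ρ r ≤ W := by
  obtain ⟨K', I', g', ⟨i, hi⟩, -, hI', rfl⟩ := (mem_GPrime_iff ρ).1 hW
  exact ⟨B.label i, B.label_mem_essentialLabels ρ hfaith hI' hle hi,
    B.blockSpace_le_of_subset_block ρ hle fun j hj =>
      (B.mem_block).2 (B.label_eq_of_space_le ρ hB hle hj hi)⟩

lemma minimals_eq_image_blockSpace [Nontrivial V] (hfaith : Function.Injective ρ)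
    (hB : B.IsNormal ρ) :
    {W | W ∈ GPrime ρ n ∧ B.space ρ ≤ W ∧
      ∀ W' ∈ GPrime ρ n, B.space ρ ≤ W' → W' ≤ W → W' = W} =
      B.blockSpace ρ '' B.essentialLabels := by
  refine Eq.trans ?_ <| setOf_minimal_eq_image (P := fun W => W ∈ GPrime ρ n ∧ B.space ρ ≤ W)
    (fun r hr => ⟨B.blockSpace_mem_GPrime ρ hB hr,
      (B.space_eq_iInf_essentialLabels ρ).trans_le (iInf₂_le r hr)⟩)
    (fun W hW => B.exists_blockSpace_le ρ hfaith hB hW.1 hW.2)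
    (fun r hr r' _ hle => B.eq_of_blockSpace_le ρ hfaith hr hle)
  ext W
  simp only [Set.mem_ofPred_eq, minimal_iff, and_assoc, and_imp, eq_comm]

end Minimality

lemma blockSpace_sup_iInf_eq_top {T : Finset (Fin n)} {s : Fin n} (hs : s ∉ T) :
    B.blockSpace ρ s ⊔ ⨅ r ∈ T, B.blockSpace ρ r = ⊤ := by
  refine eq_top_iff.2 fun w _ => Submodule.mem_sup.2
    ⟨fun m => if B.label m = s then 0 else w m, ?_,
      fun m => if B.label m = s then w m else 0, ?_, ?_⟩
  · exact B.mem_blockSpace_of_forall_eq_zero ρ fun m hm => if_pos hm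
  · refine Submodule.mem_iInf _ |>.2 fun r => Submodule.mem_iInf _ |>.2 fun hr =>
      B.mem_blockSpace_of_forall_eq_zero ρ fun m hm => if_neg ?_
    rintro rfl
    exact hs (hm ▸ hr)
  · funext m
    simp only [Pi.add_apply]
    split_ifs <;> simp

lemma finrank_iInf_blockSpace_add_sum [FiniteDimensional ℂ V] (T : Finset (Fin n)) :
    Module.finrank ℂ ↥(⨅ r ∈ T, B.blockSpace ρ r) +
      ∑ r ∈ T, (Module.finrank ℂ (Fin n → V) - Module.finrank ℂ (B.blockSpace ρ r)) =
      Module.finrank ℂ (Fin n → V) := by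
  classical
  induction T using Finset.induction_on with
  | empty =>
    rw [show ⨅ r ∈ (∅ : Finset (Fin n)), B.blockSpace ρ r = ⊤ by simp, finrank_top]
    simp
  | insert s T hs ih =>
    have h := Submodule.finrank_sup_add_finrank_inf_eq (B.blockSpace ρ s)
      (⨅ r ∈ T, B.blockSpace ρ r)
    rw [B.blockSpace_sup_iInf_eq_top ρ hs, finrank_top] at h
    have hle := Submodule.finrank_le (B.blockSpace ρ s)
    rw [Finset.sum_insert hs, Finset.iInf_insert]
    omega

end BlockData

theorem eq_inf_minimal_GPrime_and_transversal_general
    [Fintype G] [FiniteDimensional ℂ V] (ρ : Representation ℂ G V)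
    (hfaith : Function.Injective ρ)
    (n : ℕ) (A : Submodule ℂ (Fin n → V))
    (S : Set (Submodule ℂ (Fin n → V))) (hS : S ⊆ DowlingArrangement ρ n)
    (hA : A = sInf S) :
    A = sInf {W | W ∈ GPrime ρ n ∧ A ≤ W ∧
          ∀ W' ∈ GPrime ρ n, A ≤ W' → W' ≤ W → W' = W} ∧
    Module.finrank ℂ (Fin n → V) - Module.finrank ℂ A =
      ∑ᶠ W ∈ {W | W ∈ GPrime ρ n ∧ A ≤ W ∧
          ∀ W' ∈ GPrime ρ n, A ≤ W' → W' ≤ W → W' = W},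
        (Module.finrank ℂ (Fin n → V) - Module.finrank ℂ W) := by
  rcases subsingleton_or_nontrivial V with hV | hV
  · refine ⟨Subsingleton.elim _ _, ?_⟩
    simp [Module.finrank_zero_of_subsingleton]
  obtain ⟨B, hB, hBA⟩ := BlockData.exists_isNormal_space_eq_sInf hS
  rw [hA, ← hBA, B.minimals_eq_image_blockSpace ρ hfaith hB]
  have hinj : Set.InjOn (B.blockSpace ρ) B.essentialLabels := fun r hr r' _ h =>
    (B.eq_of_blockSpace_le ρ hfaith hr h.ge).symm
  refine ⟨by rw [sInf_image, B.space_eq_iInf_essentialLabels ρ]; rfl, ?_⟩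
  rw [finsum_mem_image hinj, finsum_mem_coe_finset, B.space_eq_iInf_essentialLabels ρ]
  have := B.finrank_iInf_blockSpace_add_sum ρ B.essentialLabels
  omega

theorem eq_inf_minimal_GPrime_and_transversal
    [Fintype G] [FiniteDimensional ℂ V] (ρ : Representation ℂ G V)
    (hfaith : Function.Injective ρ) (hfix : fixedSpace ρ ⊤ = ⊥)
    (n : ℕ) (A : Submodule ℂ (Fin n → V))
    (S : Set (Submodule ℂ (Fin n → V))) (hS : S ⊆ DowlingArrangement ρ n)
    (hSne : S.Nonempty) (hA : A = sInf S) :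
    A = sInf {W | W ∈ GPrime ρ n ∧ A ≤ W ∧
          ∀ W' ∈ GPrime ρ n, A ≤ W' → W' ≤ W → W' = W} ∧
    Module.finrank ℂ (Fin n → V) - Module.finrank ℂ A =
      ∑ᶠ W ∈ {W | W ∈ GPrime ρ n ∧ A ≤ W ∧
          ∀ W' ∈ GPrime ρ n, A ≤ W' → W' ≤ W → W' = W},
        (Module.finrank ℂ (Fin n → V) - Module.finrank ℂ W) :=
  eq_inf_minimal_GPrime_and_transversal_general ρ hfaith n A S hS hA
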